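/- Let p be an odd prime and let s be an integer with 0 < s < p−1. Then the polynomial b_{1,s}(α) ∈ F_p[α] has degree (p−1)/2 and factorizes into a product of pairwise distinct linear factors over F_p; that is, b_{1,s}(α) has (p−1)/2 distinct roots in F_p, each simple. -/

import Mathlib

/-
Over `𝔽_p` one has `(p-1-k)! k! = (-1)^(k+1)`, so
`b_{1,s}(α) = -∑_{u<p} ∏_{i=1}^{p-1-u} (α - i) · ∏_{i=1}^{u} (α - i/s)`.

Roots: if `a ≠ 0` and the representatives `ā, (sa)‾ ∈ [1, p)` satisfy `ā + (sa)‾ < p`, every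
summand has a factor `α - ā` or `α - (sa)‾/s` vanishing at `a`. The involution `a ↦ -a`
exchanges these `a` with those having `ā + (sa)‾ > p` (equality would force `s = -1`), so
there are `(p-1)/2` of them. Moreover `b(0) = ∑_{u<p} (-1/s)^u = 1`, so `b ≠ 0`.

Degree: the coefficient of `α^(p-1-r)` in the `u`-th summand is
`±∑_{i+j=r} e_i(1,…,p-1-u) e_j(1/s,…,u/s)`, and `e_i(1,…,p-1-u) = h_i(1,…,u)` mod `p`.
As functions of `u`, `h_i(1,…,u)` and `e_j(1/s,…,u/s)` are killed by `2i+1` and `2j+1` forward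
differences, and a function on `ℕ` killed by fewer than `p` forward differences sums to zero over
`[0, p)` in `𝔽_p`. Hence these coefficients vanish for `2r < p - 1`, i.e. `deg b ≤ (p-1)/2`, and
`b` has as many distinct roots as its degree.
-/

noncomputable def binomF {K : Type*} [Field K] (f : K) (m : ℕ) : K :=
  Polynomial.eval f (descPochhammer K m) / (m.factorial : K)

noncomputable def bPoly (p : ℕ) [Fact p.Prime] (r s : ℕ) : Polynomial (ZMod p) :=
  ∑ k ∈ Finset.range p,
    Polynomial.C ((-(r : ZMod p) / (s : ZMod p)) ^ k /
        (((p - 1 - k).factorial : ZMod p) * (k.factorial : ZMod p))) *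
      Polynomial.eval (Polynomial.C (r : ZMod p) * Polynomial.X - 1)
        (descPochhammer (Polynomial (ZMod p)) (p - 1 - k)) *
      Polynomial.eval (Polynomial.C (s : ZMod p) * Polynomial.X - 1)
        (descPochhammer (Polynomial (ZMod p)) k)

open Polynomial Finset fwdDiff Lagrange
open scoped Nat

section FwdDiff

variable {M G R : Type*} [AddCommMonoid M] [AddCommGroup G] [CommRing R] {h : M}

theorem fwdDiff_iter_eq_zero_of_le {f : M → G} {m n : ℕ} (hmn : m ≤ n)
    (hf : Δ_[h] ^[m] f = 0) : Δ_[h] ^[n] f = 0 := by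
  obtain ⟨k, rfl⟩ := Nat.exists_eq_add_of_le hmn
  rw [add_comm, Function.iterate_add_apply, hf]
  exact Function.iterate_fixed (fwdDiff_const h 0) k

theorem fwdDiff_mul (f g : M → R) :
    Δ_[h] (f * g) = Δ_[h] f * g + f * Δ_[h] g + Δ_[h] f * Δ_[h] g := by
  ext y
  simp only [fwdDiff, Pi.mul_apply, Pi.add_apply]
  ring

theorem fwdDiff_iter_mul_eq_zero {f g : M → R} {m n : ℕ}
    (hf : Δ_[h] ^[m] f = 0) (hg : Δ_[h] ^[n] g = 0) : Δ_[h] ^[m + n - 1] (f * g) = 0 := by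
  induction m generalizing n f g with
  | zero =>
    rw [show f = 0 from hf, zero_mul]
    exact fwdDiff_iter_eq_zero_of_le (Nat.zero_le _) rfl
  | succ m ihm =>
    induction n generalizing g with
    | zero =>
      rw [show g = 0 from hg, mul_zero]
      exact fwdDiff_iter_eq_zero_of_le (Nat.zero_le _) rfl
    | succ n ihn =>
      have hf' : Δ_[h] ^[m] (Δ_[h] f) = 0 := hf
      have hg' : Δ_[h] ^[n] (Δ_[h] g) = 0 := hg
      have h₁ : Δ_[h] ^[m + n] (Δ_[h] f * g) = 0 := by simpa using ihm hf' hg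
      have h₂ : Δ_[h] ^[m + n] (f * Δ_[h] g) = 0 := by simpa using ihn hg'
      have h₃ : Δ_[h] ^[m + n] (Δ_[h] f * Δ_[h] g) = 0 :=
        fwdDiff_iter_eq_zero_of_le (by omega) (ihm hf' hg')
      rw [show m + 1 + (n + 1) - 1 = m + n + 1 by omega, Function.iterate_succ_apply,
        fwdDiff_mul, fwdDiff_iter_add, fwdDiff_iter_add, h₁, h₂, h₃, add_zero, add_zero]

end FwdDiff

section SymmetricFunctions

variable {R : Type*} [CommRing R] (c : ℕ → R)

/-- `esymmPrefix c l n = e_l(c 0, …, c (n - 1))`. -/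
def esymmPrefix : ℕ → ℕ → R
  | 0, _ => 1
  | _ + 1, 0 => 0
  | l + 1, n + 1 => esymmPrefix (l + 1) n + c n * esymmPrefix l n

/-- `hsymmPrefix c l n = h_l(c 0, …, c (n - 1))`, the complete homogeneous symmetric function. -/
def hsymmPrefix : ℕ → ℕ → R
  | 0, _ => 1
  | _ + 1, 0 => 0
  | l + 1, n + 1 => hsymmPrefix (l + 1) n + c n * hsymmPrefix l (n + 1)

@[simp] theorem esymmPrefix_zero (n : ℕ) : esymmPrefix c 0 n = 1 := by cases n <;> rfl

@[simp] theorem hsymmPrefix_zero (n : ℕ) : hsymmPrefix c 0 n = 1 := by cases n <;> rw [hsymmPrefix]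

theorem fwdDiff_esymmPrefix_succ (l : ℕ) :
    Δ_[1] (esymmPrefix c (l + 1)) = c * esymmPrefix c l := by
  ext n
  simp [fwdDiff, esymmPrefix]

theorem fwdDiff_hsymmPrefix_succ (l : ℕ) :
    Δ_[1] (hsymmPrefix c (l + 1)) = c * fun n ↦ hsymmPrefix c l (n + 1) := by
  ext n
  simp [fwdDiff, hsymmPrefix]

variable {c}

theorem fwdDiff_iter_esymmPrefix_eq_zero (hc : Δ_[1] ^[2] c = 0) (l : ℕ) :
    Δ_[1] ^[2 * l + 1] (esymmPrefix c l) = 0 := by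
  induction l with
  | zero => ext n; simp [fwdDiff]
  | succ l ih =>
    rw [show 2 * (l + 1) + 1 = 2 + (2 * l + 1) - 1 + 1 by omega, Function.iterate_succ_apply,
      fwdDiff_esymmPrefix_succ]
    exact fwdDiff_iter_mul_eq_zero hc ih

theorem fwdDiff_iter_hsymmPrefix_eq_zero (hc : Δ_[1] ^[2] c = 0) (l : ℕ) :
    Δ_[1] ^[2 * l + 1] (hsymmPrefix c l) = 0 := by
  induction l with
  | zero => ext n; simp [fwdDiff]
  | succ l ih =>
    have ih' : Δ_[1] ^[2 * l + 1] (fun n ↦ hsymmPrefix c l (n + 1)) = 0 := by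
      ext n
      rw [fwdDiff_iter_comp_add, ih, Pi.zero_apply, Pi.zero_apply]
    rw [show 2 * (l + 1) + 1 = 2 + (2 * l + 1) - 1 + 1 by omega, Function.iterate_succ_apply,
      fwdDiff_hsymmPrefix_succ]
    exact fwdDiff_iter_mul_eq_zero hc ih'

theorem coeff_prod_one_sub_C_mul_X (n l : ℕ) :
    (∏ i ∈ range n, (1 - C (c i) * X)).coeff l = (-1) ^ l * esymmPrefix c l n := by
  induction n generalizing l with
  | zero => cases l <;> simp [esymmPrefix, coeff_one]
  | succ n ih =>
    rw [prod_range_succ, mul_sub, mul_one, coeff_sub, ← mul_assoc, mul_comm _ (C _), mul_assoc,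
      coeff_C_mul]
    cases l with
    | zero => simp [ih]
    | succ l => rw [coeff_mul_X, ih, ih, esymmPrefix]; ring

theorem reverse_X_sub_C [Nontrivial R] (a : R) : (X - C a).reverse = 1 - C a * X := by
  have hX : (X : R[X]).reverse = 1 := by
    rw [← one_mul (X : R[X]), reverse_mul_X, ← C_1, reverse_C]
  rw [sub_eq_add_neg, ← C_neg, reverse_add_C, hX, natDegree_X, pow_one, C_neg]
  ring

variable [IsDomain R]

theorem reverse_nodal_range (n : ℕ) :
    (nodal (range n) c).reverse = ∏ i ∈ range n, (1 - C (c i) * X) := by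
  induction n with
  | zero => simpa using reverse_C (1 : R)
  | succ n ih => rw [nodal_eq, prod_range_succ, reverse_mul_of_domain, ← nodal_eq, ih,
      reverse_X_sub_C, prod_range_succ]

theorem coeff_nodal_range {n l : ℕ} (hl : l ≤ n) :
    (nodal (range n) c).coeff (n - l) = (-1) ^ l * esymmPrefix c l n := by
  rw [← coeff_prod_one_sub_C_mul_X, ← reverse_nodal_range, coeff_reverse, natDegree_nodal,
    card_range, revAt_le (by omega)]

theorem coeff_nodal_range_mul_nodal_range {d : ℕ → R} {m n r : ℕ} (hr : r ≤ m + n) :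
    (nodal (range m) c * nodal (range n) d).coeff (m + n - r) =
      (-1) ^ r * ∑ x ∈ antidiagonal r, esymmPrefix c x.1 m * esymmPrefix d x.2 n := by
  have hdeg : (nodal (range m) c * nodal (range n) d).natDegree = m + n := by
    rw [nodal_monic.natDegree_mul nodal_monic, natDegree_nodal, natDegree_nodal, card_range,
      card_range]
  have hrev : (nodal (range m) c * nodal (range n) d).coeff (m + n - r) =
      (nodal (range m) c * nodal (range n) d).reverse.coeff r := by
    rw [coeff_reverse, hdeg, revAt_le hr]
  rw [hrev, reverse_mul_of_domain, reverse_nodal_range, reverse_nodal_range, coeff_mul, mul_sum]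
  refine sum_congr rfl fun x hx ↦ ?_
  rw [HasAntidiagonal.mem_antidiagonal] at hx
  rw [coeff_prod_one_sub_C_mul_X, coeff_prod_one_sub_C_mul_X, ← hx, pow_add]
  ring

end SymmetricFunctions

namespace ZMod

variable {p : ℕ} [Fact p.Prime]

theorem natCast_ne_zero_of_pos_of_lt {k : ℕ} (h0 : 0 < k) (hk : k < p) : (k : ZMod p) ≠ 0 := by
  rw [Ne, natCast_eq_zero_iff]
  exact fun h ↦ absurd (Nat.le_of_dvd h0 h) (by omega)

theorem natCast_val_sub_one_add_one {a : ZMod p} (ha : a ≠ 0) :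
    ((a.val - 1 : ℕ) : ZMod p) + 1 = a := by
  rw [← Nat.cast_add_one, Nat.sub_add_cancel (val_pos.mpr ha), natCast_zmod_val]

theorem choose_pred_eq_neg_one_pow {k : ℕ} (hk : k < p) :
    ((p - 1).choose k : ZMod p) = (-1) ^ k := by
  induction k with
  | zero => simp
  | succ k ih =>
    have hpascal := Nat.choose_succ_succ' (p - 1) k
    rw [Nat.sub_add_cancel (Fact.out : p.Prime).one_le] at hpascal
    have hdvd : ((p.choose (k + 1) : ℕ) : ZMod p) = 0 :=
      (ZMod.natCast_eq_zero_iff _ _).mpr ((Fact.out : p.Prime).dvd_choose_self k.succ_ne_zero hk)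
    rw [hpascal, Nat.cast_add, ih (by omega)] at hdvd
    linear_combination hdvd

theorem factorial_mul_factorial_sub_eq {k : ℕ} (hk : k < p) :
    ((p - 1 - k)! * k ! : ZMod p) = (-1) ^ (k + 1) := by
  have h := congrArg (Nat.cast : ℕ → ZMod p) (Nat.choose_mul_factorial_mul_factorial (n := p - 1)
    (k := k) (by omega))
  push_cast at h
  rw [choose_pred_eq_neg_one_pow hk, ZMod.wilsons_lemma] at h
  have hsq : ((-1 : ZMod p) ^ k) ^ 2 = 1 := by rw [← pow_mul, pow_mul', neg_one_sq, one_pow]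
  linear_combination (-1) ^ k * h - ((p - 1 - k)! * k ! : ZMod p) * hsq

theorem sum_range_eq_zero_of_fwdDiff_iter_eq_zero {f : ℕ → ZMod p} {n : ℕ} (hn : n < p)
    (hf : Δ_[1] ^[n] f = 0) : ∑ u ∈ range p, f u = 0 := by
  have h := congrFun (fwdDiff_iter_eq_zero_of_le (n := p - 1) (by omega) hf) 0
  rw [fwdDiff_iter_eq_sum_shift, Nat.sub_add_cancel (Fact.out : p.Prime).one_le] at h
  have hterm : ∀ k ∈ range p, (((-1 : ℤ) ^ (p - 1 - k) * (p - 1).choose k) • f (0 + k • 1))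
      = (-1) ^ (p - 1) * f k := by
    intro k hk
    rw [Finset.mem_range] at hk
    rw [zero_add, smul_eq_mul, mul_one, zsmul_eq_mul]
    push_cast
    rw [choose_pred_eq_neg_one_pow hk, ← pow_add, Nat.sub_add_cancel (by omega)]
  rw [Finset.sum_congr rfl hterm, ← Finset.mul_sum] at h
  exact (mul_eq_zero.mp h).resolve_left (pow_ne_zero _ (neg_ne_zero.mpr one_ne_zero))

theorem geom_sum_card {x : ZMod p} (hx : x ≠ 1) : ∑ i ∈ range p, x ^ i = 1 := by
  rw [geom_sum_eq hx, ZMod.pow_card, div_self (sub_ne_zero.mpr hx)]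

theorem nodal_range_pred_eq :
    nodal (range (p - 1)) (fun i : ℕ ↦ (i + 1 : ZMod p)) = X ^ (p - 1) - 1 := by
  have hp := (Fact.out : p.Prime).two_le
  have hdeg : (X ^ (p - 1) - 1 : (ZMod p)[X]).degree = (p - 1 : ℕ) := by
    rw [← C_1, degree_X_pow_sub_C (by omega)]
  refine eq_of_degree_le_of_eval_index_eq (v := fun i : ℕ ↦ (i + 1 : ZMod p)) (range (p - 1))
    ?_ ?_ ?_ ?_ ?_
  · intro i hi j hj hij
    simp only [coe_range, Set.mem_Iio] at hi hj
    have := congrArg val hij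
    simp only at this
    rwa [← Nat.cast_add_one, ← Nat.cast_add_one, val_cast_of_lt (by omega),
      val_cast_of_lt (by omega), Nat.add_right_cancel_iff] at this
  · rw [degree_nodal, card_range]
  · rw [degree_nodal, card_range, hdeg]
  · rw [nodal_monic.leadingCoeff, leadingCoeff_X_pow_sub_one (by omega)]
  · intro i hi
    rw [eval_nodal_at_node (v := fun i : ℕ ↦ (i + 1 : ZMod p)) hi, eval_sub, eval_pow, eval_X,
      eval_one, pow_card_sub_one_eq_one, sub_self]
    rw [mem_range] at hi
    exact_mod_cast natCast_ne_zero_of_pos_of_lt (Nat.succ_pos i) (by omega)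

theorem esymmPrefix_pred_eq_zero {l : ℕ} (hl0 : 0 < l) (hl : l < p - 1) :
    esymmPrefix (fun i : ℕ ↦ (i + 1 : ZMod p)) l (p - 1) = 0 := by
  have h := coeff_nodal_range (c := fun i : ℕ ↦ (i + 1 : ZMod p)) hl.le
  rw [nodal_range_pred_eq, coeff_sub, coeff_X_pow, coeff_one, if_neg (by omega),
    if_neg (by omega), sub_zero] at h
  exact (mul_eq_zero.mp h.symm).resolve_left (pow_ne_zero _ (neg_ne_zero.mpr one_ne_zero))

theorem esymmPrefix_sub_eq_hsymmPrefix {l : ℕ} (hl : l ≤ p - 2) {u : ℕ} (hu : u ≤ p - 1) :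
    esymmPrefix (fun i : ℕ ↦ (i + 1 : ZMod p)) l (p - 1 - u) =
      hsymmPrefix (fun i : ℕ ↦ (i + 1 : ZMod p)) l u := by
  induction l generalizing u with
  | zero => simp
  | succ l ihl =>
    induction u with
    | zero => rw [Nat.sub_zero, esymmPrefix_pred_eq_zero (by omega) (by omega), hsymmPrefix]
    | succ u ihu =>
      have hnode : (((p - 1 - (u + 1) : ℕ) : ZMod p) + 1) = -(u + 1) := by
        have h := congrArg (Nat.cast : ℕ → ZMod p)
          (show p - 1 - (u + 1) + 1 + (u + 1) = p by omega)
        push_cast at h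
        rw [natCast_self] at h
        linear_combination h
      have hrec : esymmPrefix (fun i : ℕ ↦ (i + 1 : ZMod p)) (l + 1) (p - 1 - u) =
          esymmPrefix (fun i : ℕ ↦ (i + 1 : ZMod p)) (l + 1) (p - 1 - (u + 1)) +
            (((p - 1 - (u + 1) : ℕ) : ZMod p) + 1) *
              esymmPrefix (fun i : ℕ ↦ (i + 1 : ZMod p)) l (p - 1 - (u + 1)) := by
        rw [show p - 1 - u = p - 1 - (u + 1) + 1 by omega]
        rfl
      rw [hnode, ihu (by omega), ihl (by omega) hu] at hrec
      rw [hsymmPrefix]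
      linear_combination -hrec

theorem sum_esymmPrefix_sub_mul_esymmPrefix_eq_zero {d : ℕ → ZMod p} (hd : Δ_[1] ^[2] d = 0)
    {a b : ℕ} (hab : 2 * (a + b) + 1 < p) :
    ∑ u ∈ range p, esymmPrefix (fun i : ℕ ↦ (i + 1 : ZMod p)) a (p - 1 - u) * esymmPrefix d b u
      = 0 := by
  have hc : Δ_[1] ^[2] (fun i : ℕ ↦ (i + 1 : ZMod p)) = 0 := by
    ext n
    simp [fwdDiff]
  have hdiff := fwdDiff_iter_mul_eq_zero (fwdDiff_iter_hsymmPrefix_eq_zero hc a)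
    (fwdDiff_iter_esymmPrefix_eq_zero hd b)
  rw [show 2 * a + 1 + (2 * b + 1) - 1 = 2 * (a + b) + 1 by omega] at hdiff
  rw [← sum_range_eq_zero_of_fwdDiff_iter_eq_zero hab hdiff]
  refine sum_congr rfl fun u hu ↦ ?_
  rw [esymmPrefix_sub_eq_hsymmPrefix (by omega) (by rw [mem_range] at hu; omega),
    Pi.mul_apply]

theorem val_add_val_mul_add_val_neg_add_val_mul_neg {t a : ZMod p} (ha : a ≠ 0)
    (hta : t * a ≠ 0) :
    a.val + (t * a).val + ((-a).val + (t * -a).val) = 2 * p := by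
  rw [mul_neg, neg_val, neg_val, if_neg ha, if_neg hta]
  have := val_lt a
  have := val_lt (t * a)
  omega

theorem val_add_val_mul_ne {t a : ZMod p} (ht1 : t ≠ -1) (ha : a ≠ 0) :
    a.val + (t * a).val ≠ p := by
  intro h
  have hneg : t * a = -a := by
    apply val_injective
    rw [neg_val, if_neg ha]
    omega
  have : (t + 1) * a = 0 := by linear_combination hneg
  exact ht1 (eq_neg_of_add_eq_zero_left ((mul_eq_zero.mp this).resolve_right ha))

theorem card_filter_val_add_val_mul_lt {t : ZMod p} (ht0 : t ≠ 0) (ht1 : t ≠ -1) :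
    #{a : ZMod p | a ≠ 0 ∧ a.val + (t * a).val < p} = (p - 1) / 2 := by
  set N := ({a | a ≠ 0} : Finset (ZMod p))
  have hsplit := N.card_filter_add_card_filter_not (fun a ↦ a.val + (t * a).val < p)
  have hN : #N = p - 1 := by
    simp [N, filter_ne', ZMod.card]
  have hsymm : #(N.filter fun a ↦ a.val + (t * a).val < p) =
      #(N.filter fun a ↦ ¬ a.val + (t * a).val < p) := by
    refine card_nbij' Neg.neg Neg.neg ?_ ?_ (fun a _ ↦ neg_neg a) (fun a _ ↦ neg_neg a)
    · intro a ha
      simp only [N, coe_filter, mem_filter, mem_univ, true_and] at ha ⊢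
      obtain ⟨ha0, hlt⟩ := ha
      have := val_add_val_mul_add_val_neg_add_val_mul_neg ha0 (mul_ne_zero ht0 ha0)
      exact ⟨neg_ne_zero.mpr ha0, by omega⟩
    · intro a ha
      simp only [N, coe_filter, mem_filter, mem_univ, true_and] at ha ⊢
      obtain ⟨ha0, hge⟩ := ha
      have := val_add_val_mul_add_val_neg_add_val_mul_neg ha0 (mul_ne_zero ht0 ha0)
      have := val_add_val_mul_ne ht1 ha0
      exact ⟨neg_ne_zero.mpr ha0, by omega⟩
  rw [filter_filter] at hsplit hsymm
  omega

end ZMod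

theorem Polynomial.natDegree_eq_card_and_splits_and_squarefree {K : Type*} [Field K] {f : K[X]}
    {S : Finset K} (hf : f ≠ 0) (hdeg : f.natDegree ≤ #S) (hS : ∀ a ∈ S, f.IsRoot a) :
    f.natDegree = #S ∧ f.Splits ∧ Squarefree f := by
  classical
  have hsub : S ⊆ f.roots.toFinset := fun a ha ↦ by
    rw [Multiset.mem_toFinset, mem_roots hf]
    exact hS a ha
  have h₁ := card_le_card hsub
  have h₂ := Multiset.toFinset_card_le f.roots
  have h₃ := card_roots' f
  have hsplits : f.Splits := splits_iff_card_roots.mpr (by omega)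
  have hnodup : f.roots.Nodup := Multiset.toFinset_card_eq_card_iff_nodup.mp (by omega)
  exact ⟨by omega, hsplits, ((nodup_roots_iff_of_splits hf hsplits).mp hnodup).squarefree⟩

theorem eval_C_mul_X_sub_one_descPochhammer {K : Type*} [Field K] {a : K} (ha : a ≠ 0) (n : ℕ) :
    (descPochhammer K[X] n).eval (C a * X - 1) =
      C a ^ n * nodal (range n) (fun i : ℕ ↦ (i + 1 : K) * a⁻¹) := by
  rw [descPochhammer_eval_eq_prod_range, nodal_eq, ← card_range n, ← prod_const,
    card_range, ← prod_mul_distrib]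
  refine prod_congr rfl fun i _ ↦ ?_
  rw [mul_sub, ← C_mul, mul_left_comm, mul_inv_cancel₀ ha, mul_one]
  simp only [map_add, map_natCast, map_one]
  ring

theorem eval_X_sub_one_descPochhammer {K : Type*} [Field K] (n : ℕ) :
    (descPochhammer K[X] n).eval (X - 1) = nodal (range n) (fun i : ℕ ↦ (i + 1 : K)) := by
  simpa using eval_C_mul_X_sub_one_descPochhammer (one_ne_zero' K) n

section BPoly

variable {p : ℕ} [Fact p.Prime] {s : ℕ}

theorem bPoly_one_eq (hs : (s : ZMod p) ≠ 0) :
    bPoly p 1 s = -∑ u ∈ range p, nodal (range (p - 1 - u)) (fun i : ℕ ↦ (i + 1 : ZMod p)) *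
      nodal (range u) (fun i : ℕ ↦ (i + 1 : ZMod p) * (s : ZMod p)⁻¹) := by
  rw [bPoly, ← sum_neg_distrib]
  refine sum_congr rfl fun k hk ↦ ?_
  have hcoeff : C ((-1 / s) ^ k / ((p - 1 - k)! * k ! : ZMod p)) * C (s : ZMod p) ^ k = -1 := by
    rw [← C_pow, ← C_mul, ZMod.factorial_mul_factorial_sub_eq (mem_range.mp hk), div_pow,
      pow_succ, ← C_1, ← C_neg]
    congr 1
    field_simp
  rw [Nat.cast_one, C_1, one_mul, eval_X_sub_one_descPochhammer,
    eval_C_mul_X_sub_one_descPochhammer hs]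
  linear_combination (nodal (range (p - 1 - k)) (fun i : ℕ ↦ (i + 1 : ZMod p)) *
    nodal (range k) (fun i : ℕ ↦ (i + 1 : ZMod p) * (s : ZMod p)⁻¹)) * hcoeff

theorem natDegree_bPoly_one_le (hs : (s : ZMod p) ≠ 0) :
    (bPoly p 1 s).natDegree ≤ (p - 1) / 2 := by
  refine natDegree_le_iff_coeff_eq_zero.mpr fun m hm ↦ ?_
  rw [bPoly_one_eq hs, coeff_neg, finsetSum_coeff, neg_eq_zero]
  by_cases hmp : p - 1 < m
  · refine sum_eq_zero fun u hu ↦ coeff_eq_zero_of_natDegree_lt ?_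
    rw [mem_range] at hu
    refine natDegree_mul_le.trans_lt ?_
    rw [natDegree_nodal, natDegree_nodal, card_range, card_range]
    omega
  obtain ⟨r, rfl⟩ : ∃ r, m = p - 1 - r := ⟨p - 1 - m, by omega⟩
  have hd : Δ_[1] ^[2] (fun i : ℕ ↦ (i + 1 : ZMod p) * (s : ZMod p)⁻¹) = 0 := by
    ext n
    simp only [Function.iterate_succ_apply, Function.iterate_zero_apply, fwdDiff, Nat.cast_add,
      Nat.cast_one, Pi.zero_apply]
    ring
  calc _ = ∑ u ∈ range p, (-1) ^ r * ∑ x ∈ antidiagonal r,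
        esymmPrefix (fun i : ℕ ↦ (i + 1 : ZMod p)) x.1 (p - 1 - u) *
          esymmPrefix (fun i : ℕ ↦ (i + 1 : ZMod p) * (s : ZMod p)⁻¹) x.2 u := by
        refine sum_congr rfl fun u hu ↦ ?_
        rw [mem_range] at hu
        rw [← coeff_nodal_range_mul_nodal_range (by omega),
          show p - 1 - u + u - r = p - 1 - r by omega]
    _ = 0 := by
      rw [← mul_sum, sum_comm, sum_eq_zero fun x hx ↦
        ZMod.sum_esymmPrefix_sub_mul_esymmPrefix_eq_zero hd ?_, mul_zero]
      rw [HasAntidiagonal.mem_antidiagonal] at hx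
      omega

theorem eval_zero_bPoly_one (hs : (s : ZMod p) ≠ 0) (hs1 : (s : ZMod p) ≠ -1) :
    (bPoly p 1 s).eval 0 = 1 := by
  have heval : ∀ (n : ℕ) (t : ZMod p),
      (nodal (range n) (fun i : ℕ ↦ (i + 1 : ZMod p) * t)).eval 0 = (-1) ^ n * n ! * t ^ n := by
    intro n t
    rw [eval_nodal]
    simp_rw [zero_sub, prod_neg, prod_mul_distrib, prod_const, card_range]
    rw [← prod_range_add_one_eq_factorial, Nat.cast_prod]
    push_cast
    ring
  have hterm : ∀ u ∈ range p, ((nodal (range (p - 1 - u)) (fun i : ℕ ↦ (i + 1 : ZMod p))) *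
      nodal (range u) (fun i : ℕ ↦ (i + 1 : ZMod p) * (s : ZMod p)⁻¹)).eval 0 =
        -(-(s : ZMod p)⁻¹) ^ u := by
    intro u hu
    have h1 := heval (p - 1 - u) 1
    simp only [mul_one, one_pow] at h1
    have hfac := ZMod.factorial_mul_factorial_sub_eq (mem_range.mp hu)
    have hsign : (-1 : ZMod p) ^ (p - 1 - u) * (-1) ^ u = 1 := by
      rw [← pow_add, Nat.sub_add_cancel (by rw [mem_range] at hu; omega),
        ZMod.pow_card_sub_one_eq_one (neg_ne_zero.mpr one_ne_zero)]
    rw [eval_mul, h1, heval, neg_pow (s : ZMod p)⁻¹]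
    linear_combination ((p - 1 - u)! * u ! * (s : ZMod p)⁻¹ ^ u) * hsign +
      (s : ZMod p)⁻¹ ^ u * hfac
  rw [bPoly_one_eq hs, eval_neg, eval_finsetSum, sum_congr rfl hterm, sum_neg_distrib, neg_neg,
    ZMod.geom_sum_card]
  intro h
  apply hs1
  rw [← inv_inv (s : ZMod p), ← neg_neg (s : ZMod p)⁻¹, h, inv_neg, inv_one]

theorem eval_bPoly_one_eq_zero (hs : (s : ZMod p) ≠ 0) {a : ZMod p} (ha : a ≠ 0)
    (hlt : a.val + ((s : ZMod p) * a).val < p) : (bPoly p 1 s).eval a = 0 := by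
  have hsa : (s : ZMod p) * a ≠ 0 := mul_ne_zero hs ha
  rw [bPoly_one_eq hs, eval_neg, eval_finsetSum, neg_eq_zero]
  refine sum_eq_zero fun u hu ↦ ?_
  rw [mem_range] at hu
  have hva := ZMod.val_pos.mpr ha
  have hvsa := ZMod.val_pos.mpr hsa
  rw [eval_mul, mul_eq_zero]
  by_cases hcase : a.val ≤ p - 1 - u
  · left
    have h := eval_nodal_at_node (v := fun i : ℕ ↦ (i + 1 : ZMod p))
      (mem_range.mpr (show a.val - 1 < p - 1 - u by omega))
    rwa [ZMod.natCast_val_sub_one_add_one ha] at h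
  · right
    have h := eval_nodal_at_node (v := fun i : ℕ ↦ (i + 1 : ZMod p) * (s : ZMod p)⁻¹)
      (mem_range.mpr (show ((s : ZMod p) * a).val - 1 < u by omega))
    rwa [ZMod.natCast_val_sub_one_add_one hsa, mul_comm, inv_mul_cancel_left₀ hs] at h

end BPoly

theorem stmt11_general (p s : ℕ) [Fact p.Prime] (hs0 : 0 < s) (hsp : s < p - 1) :
    (bPoly p 1 s).natDegree = (p - 1) / 2 ∧
    Polynomial.Splits (bPoly p 1 s) ∧
    Squarefree (bPoly p 1 s) := by
  have hs : (s : ZMod p) ≠ 0 := ZMod.natCast_ne_zero_of_pos_of_lt hs0 (by omega)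
  have hs1 : (s : ZMod p) ≠ -1 := by
    intro h
    refine ZMod.natCast_ne_zero_of_pos_of_lt (p := p) (k := s + 1) (by omega) (by omega) ?_
    rw [Nat.cast_add_one, h, neg_add_cancel]
  have hb : bPoly p 1 s ≠ 0 := fun h ↦ by simpa [h] using eval_zero_bPoly_one hs hs1
  set S : Finset (ZMod p) := {a | a ≠ 0 ∧ a.val + ((s : ZMod p) * a).val < p}
  have hS : #S = (p - 1) / 2 := ZMod.card_filter_val_add_val_mul_lt hs hs1
  rw [← hS]
  refine natDegree_eq_card_and_splits_and_squarefree hb (hS ▸ natDegree_bPoly_one_le hs) ?_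
  intro a ha
  rw [mem_filter] at ha
  exact eval_bPoly_one_eq_zero hs ha.2.1 ha.2.2

theorem stmt11 (p s : ℕ) [Fact p.Prime] (hodd : Odd p) (hs0 : 0 < s) (hsp : s < p - 1) :
    (bPoly p 1 s).natDegree = (p - 1) / 2 ∧
    Polynomial.Splits (bPoly p 1 s) ∧
    Squarefree (bPoly p 1 s) :=
  stmt11_general p s hs0 hsp
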